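/- Fix natural numbers N ≥ 1 and 1 ≤ s ≤ N, and μ > 0. Then the limit as λ_e → ∞ of E[W_s](λ_e) equals Σ_{j=0}^{s-1} 1/(μ(1 - j/N)), where E[W_s](λ_e) = Σ_{j=0}^{s-1} (N choose j) Σ_{k=0}^{j} (j choose k)(-1)^{j-k} Σ_{v=0}^{N-k} (N-k choose v) ω^v (1-ω)^{N-k-v} / (λ_e(N-k-v) + (μ/N)v), with ω = ω(λ_e) = 1 - ν₀(λ_e)·(μ/N)/((μ/N) - λ_e) and ν₀(λ_e) = (λ_e N/μ - 1)/((λ_e N/μ)^{B+1} - 1) for a fixed natural number B ≥ 1. -/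

import Mathlib

/-!
As `λ → ∞`, `ν₀` decays like `λ^{-B}` and `(μ/N)/(μ/N - λ) → 0`, so `ω → 1`.
In the inner sum every term with `v < N - k` has `λ (N - k - v) → ∞` in its denominator, so only
`v = N - k` survives and contributes `1 / ((μ/N)(N - k))`. The remaining alternating sum over `k`
is the `j`-th forward difference of `t ↦ 1/(N - t)` at `0`, namely `j! / (N (N-1) ⋯ (N-j))`,
which turns the `j`-th summand into `N / (μ (N - j))`.
-/

open Filter Finset Topology
open scoped Nat

lemma prod_range_succ_sub_sub_eq_mul (x y : ℝ) (j : ℕ) :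
    ∏ i ∈ range (j + 1), (x - y - i) = (x - y) * ∏ i ∈ range j, (x - (y + 1) - i) := by
  rw [prod_range_succ', mul_comm]
  congr 1
  · simp
  · refine prod_congr rfl fun i _ => ?_
    push_cast
    ring

lemma fwdDiff_iter_inv_sub {x : ℝ} (j : ℕ) {y : ℝ} (h : y + j < x) :
    (fwdDiff 1)^[j] (fun t => (x - t)⁻¹) y = j ! / ∏ i ∈ range (j + 1), (x - y - i) := by
  induction j generalizing y with
  | zero => simp
  | succ j ih =>
    push_cast at h
    have hj : (0 : ℝ) ≤ j := j.cast_nonneg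
    have hA : 0 < ∏ i ∈ range j, (x - (y + 1) - i) := prod_pos fun i hi => by
      have : (i : ℝ) < j := by exact_mod_cast mem_range.1 hi
      linarith
    have hx : x - y ≠ 0 := (by linarith : 0 < x - y).ne'
    have hx' : x - (y + 1) - j ≠ 0 := (by linarith : 0 < x - (y + 1) - j).ne'
    rw [Function.iterate_succ_apply', fwdDiff, ih (by linarith), ih (by linarith),
      prod_range_succ_sub_sub_eq_mul x y (j + 1), prod_range_succ_sub_sub_eq_mul x y,
      prod_range_succ _ j, Nat.factorial_succ]
    push_cast
    field_simp
    ring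

lemma sum_choose_mul_neg_one_pow_div_sub (x : ℝ) (j : ℕ) (h : (j : ℝ) < x) :
    ∑ k ∈ range (j + 1), (j.choose k : ℝ) * (-1) ^ (j - k) / (x - k) =
      j ! / ∏ i ∈ range (j + 1), (x - i) := by
  have := fwdDiff_iter_inv_sub (x := x) j (y := 0) (by simpa using h)
  rw [fwdDiff_iter_eq_sum_shift] at this
  simpa [zsmul_eq_mul, div_eq_mul_inv, mul_comm] using this

lemma prod_range_natCast_sub (N m : ℕ) (h : m ≤ N) :
    ∏ i ∈ range m, ((N : ℝ) - i) = N.descFactorial m := by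
  rw [Nat.descFactorial_eq_prod_range, Nat.cast_prod]
  exact prod_congr rfl fun i hi => (Nat.cast_sub (by simp at hi; omega)).symm

lemma choose_mul_sum_choose_mul_neg_one_pow_div_sub {N j : ℕ} (h : j < N) :
    (N.choose j : ℝ) * ∑ k ∈ range (j + 1), (j.choose k : ℝ) * (-1) ^ (j - k) / ((N : ℝ) - k) =
      ((N : ℝ) - j)⁻¹ := by
  have hj : (j : ℝ) < N := by exact_mod_cast h
  rw [sum_choose_mul_neg_one_pow_div_sub _ _ hj, prod_range_natCast_sub _ _ h,
    Nat.descFactorial_succ, Nat.descFactorial_eq_factorial_mul_choose, Nat.cast_mul,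
    Nat.cast_sub h.le, Nat.cast_mul]
  have : (N.choose j : ℝ) ≠ 0 := by exact_mod_cast (Nat.choose_pos h.le).ne'
  field_simp

lemma tendsto_sub_one_div_pow_sub_one {B : ℕ} (hB : 1 ≤ B) :
    Tendsto (fun x : ℝ => (x - 1) / (x ^ (B + 1) - 1)) atTop (𝓝 0) := by
  have := Polynomial.div_tendsto_atTop_zero_of_degree_lt (Polynomial.X - Polynomial.C (1 : ℝ))
    (Polynomial.X ^ (B + 1) - Polynomial.C 1) (by
      rw [Polynomial.degree_X_sub_C, Polynomial.degree_X_pow_sub_C (by omega)]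
      exact_mod_cast (by omega : 1 < B + 1))
  simpa using this

lemma tendsto_one_sub_mul_div_sub {N mu : ℝ} (hN : 0 < N) (hmu : 0 < mu) {B : ℕ} (hB : 1 ≤ B) :
    Tendsto (fun lam : ℝ =>
      1 - ((lam * N / mu - 1) / ((lam * N / mu) ^ (B + 1) - 1)) * (mu / N) / (mu / N - lam))
      atTop (𝓝 1) := by
  have hnu : Tendsto (fun lam : ℝ => (lam * N / mu - 1) / ((lam * N / mu) ^ (B + 1) - 1))
      atTop (𝓝 0) :=
    (tendsto_sub_one_div_pow_sub_one hB).comp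
      ((tendsto_id.atTop_mul_const hN).atTop_div_const hmu)
  have hden : Tendsto (fun lam : ℝ => mu / N - lam) atTop atBot :=
    tendsto_atBot_add_const_left _ _ tendsto_neg_atTop_atBot
  simpa using tendsto_const_nhds.sub ((hnu.mul_const (mu / N)).div_atBot hden)

lemma tendsto_sum_choose_mul_pow_div {ω : ℝ → ℝ} (hω : Tendsto ω atTop (𝓝 1)) (n : ℕ) (b : ℝ) :
    Tendsto (fun lam : ℝ => ∑ v ∈ range (n + 1),
        (n.choose v : ℝ) * ω lam ^ v * (1 - ω lam) ^ (n - v) / (lam * ((n : ℝ) - v) + b * v))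
      atTop (𝓝 (1 / (b * n))) := by
  have hlow : Tendsto (fun lam : ℝ => ∑ v ∈ range n,
      (n.choose v : ℝ) * ω lam ^ v * (1 - ω lam) ^ (n - v) / (lam * ((n : ℝ) - v) + b * v))
      atTop (𝓝 0) := by
    rw [← sum_const_zero (s := range n)]
    refine tendsto_finsetSum _ fun v hv => ?_
    have hnv : 0 < (n : ℝ) - v := sub_pos.2 (by exact_mod_cast mem_range.1 hv)
    exact ((tendsto_const_nhds.mul (hω.pow v)).mul ((tendsto_const_nhds.sub hω).pow _)).div_atTop
      (tendsto_atTop_add_const_right _ _ (tendsto_id.atTop_mul_const hnv))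
  have htop : Tendsto (fun lam : ℝ => ω lam ^ n / (b * n)) atTop (𝓝 (1 / (b * n))) := by
    simpa using (hω.pow n).div_const (b * n)
  simpa [sum_range_succ] using hlow.add htop

lemma choose_mul_sum_choose_mul_neg_one_pow_mul_one_div {N j : ℕ} (h : j < N) (mu : ℝ) :
    (N.choose j : ℝ) * ∑ k ∈ range (j + 1),
        (j.choose k : ℝ) * (-1) ^ (j - k) * (1 / (mu / N * ((N : ℝ) - k))) =
      1 / (mu * (1 - (j : ℝ) / N)) := by
  have hN : (N : ℝ) ≠ 0 := by exact_mod_cast (j.zero_le.trans_lt h).ne'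
  calc _ = N / mu * ((N.choose j : ℝ) * ∑ k ∈ range (j + 1),
        (j.choose k : ℝ) * (-1) ^ (j - k) / ((N : ℝ) - k)) := by
          rw [mul_sum, mul_sum, mul_sum]
          refine sum_congr rfl fun k _ => ?_
          field_simp
    _ = _ := by
          rw [choose_mul_sum_choose_mul_neg_one_pow_div_sub h]
          field_simp

theorem stmt8_general (N s B : ℕ) (hN : 1 ≤ N) (hsN : s ≤ N) (hB : 1 ≤ B)
    (mu : ℝ) (hmu : 0 < mu) :
    Filter.Tendsto
      (fun lam : ℝ =>
        ∑ j ∈ Finset.range s, (N.choose j : ℝ) *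
          ∑ k ∈ Finset.range (j + 1), (j.choose k : ℝ) * (-1 : ℝ) ^ (j - k) *
            ∑ v ∈ Finset.range (N - k + 1),
              ((N - k).choose v : ℝ) *
                (1 - ((lam * N / mu - 1) / ((lam * N / mu) ^ (B + 1) - 1)) *
                    (mu / N) / (mu / N - lam)) ^ v *
                (1 - (1 - ((lam * N / mu - 1) / ((lam * N / mu) ^ (B + 1) - 1)) *
                    (mu / N) / (mu / N - lam))) ^ (N - k - v) /
                (lam * (((N : ℝ) - k) - v) + (mu / N) * v))
      Filter.atTop
      (nhds (∑ j ∈ Finset.range s, 1 / (mu * (1 - (j : ℝ) / N)))) := by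
  have hω := tendsto_one_sub_mul_div_sub (N := N) (by exact_mod_cast hN) hmu hB
  refine tendsto_finsetSum _ fun j hj => ?_
  have hjN : j < N := (mem_range.1 hj).trans_le hsN
  rw [← choose_mul_sum_choose_mul_neg_one_pow_mul_one_div hjN]
  refine (tendsto_finsetSum _ fun k hk => ?_).const_mul _
  have hkN : k ≤ N := (Nat.lt_succ_iff.1 (mem_range.1 hk)).trans hjN.le
  have := tendsto_sum_choose_mul_pow_div hω (N - k) (mu / N)
  rw [Nat.cast_sub hkN] at this
  exact this.const_mul _

theorem stmt8 (N s B : ℕ) (hN : 1 ≤ N) (hs1 : 1 ≤ s) (hsN : s ≤ N) (hB : 1 ≤ B)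
    (mu : ℝ) (hmu : 0 < mu) :
    Filter.Tendsto
      (fun lam : ℝ =>
        ∑ j ∈ Finset.range s, (N.choose j : ℝ) *
          ∑ k ∈ Finset.range (j + 1), (j.choose k : ℝ) * (-1 : ℝ) ^ (j - k) *
            ∑ v ∈ Finset.range (N - k + 1),
              ((N - k).choose v : ℝ) *
                (1 - ((lam * N / mu - 1) / ((lam * N / mu) ^ (B + 1) - 1)) *
                    (mu / N) / (mu / N - lam)) ^ v *
                (1 - (1 - ((lam * N / mu - 1) / ((lam * N / mu) ^ (B + 1) - 1)) *
                    (mu / N) / (mu / N - lam))) ^ (N - k - v) /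
                (lam * (((N : ℝ) - k) - v) + (mu / N) * v))
      Filter.atTop
      (nhds (∑ j ∈ Finset.range s, 1 / (mu * (1 - (j : ℝ) / N)))) :=
  stmt8_general N s B hN hsN hB mu hmu
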